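/- arXiv:2102.11632 — 2 statements merged into one kernel-verified Lean document; each statement's English description precedes it below -/
import Mathlib

section
/- For t > 0 and x > 1, setting y = √(x−1)·√(t+x−1)/√x and λ = √(x−1)·√x·√(t+x−1) / (2(t−2)x − t + 3x² + 1), one has y > 0, λ > 0, the denominator 2(t−2)x − t + 3x² + 1 is positive, and λy < 1, and moreover t/(t+2x−2) = −λt/(y(λy−1)); i.e. these choices solve the consistency equations for Z. -/
/-! With `c = t + 2x - 2`, the denominator factors as `x (y² + c)` because `x y² = (x - 1)(t + x - 1)`,
and `λ = y / (y² + c)`. Then `1 - λy = c / (y² + c)`, and both expressions for `Z` reduce to `t / c`. -/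

section

variable {c y : ℝ}

lemma div_sq_add_mul_lt_one (hc : 0 < c) : y / (y ^ 2 + c) * y < 1 := by
  have hpos : 0 < y ^ 2 + c := by positivity
  rw [div_mul_eq_mul_div, div_lt_one hpos]
  linarith

lemma div_eq_neg_mul_div_mul_sub_one (hy : y ≠ 0) (hc : 0 < c) (t : ℝ) :
    t / c = -(y / (y ^ 2 + c) * t) / (y * (y / (y ^ 2 + c) * y - 1)) := by
  have hpos : 0 < y ^ 2 + c := by positivity
  have hsub : y / (y ^ 2 + c) * y - 1 = -c / (y ^ 2 + c) := by
    field_simp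
    ring
  rw [hsub]
  field_simp

end

lemma sq_sqrt_mul_sqrt_div_sqrt {a b x : ℝ} (ha : 0 ≤ a) (hb : 0 ≤ b) (hx : 0 ≤ x) :
    (√a * √b / √x) ^ 2 = a * b / x := by
  rw [div_pow, mul_pow, Real.sq_sqrt ha, Real.sq_sqrt hb, Real.sq_sqrt hx]

/-- The explicit choices of `y` and `λ` in terms of `t > 0` and `x > 1` solve
the consistency equations for `Z`. -/
theorem stmt6 (t x : ℝ) (ht : 0 < t) (hx : 1 < x) :
    let y := Real.sqrt (x - 1) * Real.sqrt (t + x - 1) / Real.sqrt x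
    let l := Real.sqrt (x - 1) * Real.sqrt x * Real.sqrt (t + x - 1) /
      (2 * (t - 2) * x - t + 3 * x ^ 2 + 1)
    0 < y ∧ 0 < l ∧ 0 < 2 * (t - 2) * x - t + 3 * x ^ 2 + 1 ∧ l * y < 1 ∧
      t / (t + 2 * x - 2) = -(l * t) / (y * (l * y - 1)) := by
  intro y l
  have hx₀ : 0 < x := by linarith
  have hc : 0 < t + 2 * x - 2 := by linarith
  have hy : 0 < y := by
    have := Real.sqrt_pos.mpr (show 0 < x - 1 by linarith)
    have := Real.sqrt_pos.mpr (show 0 < t + x - 1 by linarith)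
    positivity
  have hD : 2 * (t - 2) * x - t + 3 * x ^ 2 + 1 = x * (y ^ 2 + (t + 2 * x - 2)) := by
    rw [sq_sqrt_mul_sqrt_div_sqrt (by linarith) (by linarith) hx₀.le]
    field_simp
    ring
  have hl : l = y / (y ^ 2 + (t + 2 * x - 2)) := by
    simp only [l, y, hD]
    field_simp
    rw [Real.sq_sqrt hx₀.le]
    ring
  rw [hl, hD]
  exact ⟨hy, by positivity, by positivity, div_sq_add_mul_lt_one hc,
    div_eq_neg_mul_div_mul_sub_one hy.ne' hc t⟩
end

section
/- For every t > 0, the quantity x(t) := 2/3 − t/3 + (1/6)√(6·2^{1/3}·((t−1)²t²)^{1/3}·ω + 4(t−1)t + 4) + (1/2)√(8(t−2)²/9 + 8(t−1)/3 − (2/3)·2^{1/3}·((t−1)²t²)^{1/3}·ω − 4(t+1)(2t−1)(t−2)/(9√(3((t−1)²t²)^{1/3}ω/2^{2/3} + (t−1)t + 1))) — interpreted as the relevant real root of the criticality polynomial — satisfies x(t) > 1. More concretely: the polynomial equation in x obtained by substituting y = √((x−1)(t+x−1)/x) into the criticality condition has, for each t > 0, a real solution x with x > 1. -/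
/-!
Write `P = (x - 1)(t + x - 1)` and `T = t + 2x - 2`. On the curve `x y² = P` the radicand
`1 - 4λ²x/(1 - λy)²` equals `(t/T)²`, so `Z = t/T` and all four partial derivatives of
`f^∙, f^⋄` become rational in `t, x, y`. After clearing denominators and eliminating `y²`, the
criticality equation reads `(PT - xt²)² = 4P³`. Its factor `PT - xt² + 2P√P` equals `-t²` at
`x = 1` and is positive at `x = t + 2`, so the intermediate value theorem gives a root `x > 1`.
-/

open Real

namespace Criticality

noncomputable def lam (t x y : ℝ) : ℝ := y / (t + 2 * x + y ^ 2 - 2)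

noncomputable def Z (l a b : ℝ) : ℝ := √(1 - 4 * l ^ 2 * a / (1 - l * b) ^ 2)

noncomputable def fBullet (t l a b : ℝ) : ℝ := t * (1 - Z l a b) / (2 * a * Z l a b)

noncomputable def fDiamond (t l a b : ℝ) : ℝ := t * l / ((1 - l * b) * Z l a b)

def criticalityPoly (t x : ℝ) : ℝ :=
  ((x - 1) * (t + x - 1) * (t + 2 * x - 2) - x * t ^ 2) ^ 2 - 4 * ((x - 1) * (t + x - 1)) ^ 3

section CriticalPoint

variable {t x y : ℝ}

theorem lam_denom_pos (hx : 1 < x) (ht : 0 < t) : 0 < t + 2 * x + y ^ 2 - 2 := by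
  nlinarith [sq_nonneg y]

theorem one_sub_lam_mul (hx : 1 < x) (ht : 0 < t) :
    1 - lam t x y * y = (t + 2 * x - 2) / (t + 2 * x + y ^ 2 - 2) := by
  have := (lam_denom_pos (y := y) hx ht).ne'
  rw [lam]
  field_simp
  ring

theorem one_sub_lam_mul_pos (hx : 1 < x) (ht : 0 < t) : 0 < 1 - lam t x y * y := by
  rw [one_sub_lam_mul hx ht]
  exact div_pos (by linarith) (lam_denom_pos hx ht)

/-- The radicand is a perfect square because `(t + 2x - 2)² - 4(x - 1)(t + x - 1) = t²`. -/
theorem radicand_eq (hx : 1 < x) (ht : 0 < t) (hy : y ^ 2 * x = (x - 1) * (t + x - 1)) :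
    1 - 4 * lam t x y ^ 2 * x / (1 - lam t x y * y) ^ 2 = (t / (t + 2 * x - 2)) ^ 2 := by
  have := (lam_denom_pos (y := y) hx ht).ne'
  have : t + 2 * x - 2 ≠ 0 := by linarith
  rw [one_sub_lam_mul hx ht, lam]
  field_simp
  linear_combination (-4 : ℝ) * hy

theorem Z_eq (hx : 1 < x) (ht : 0 < t) (hy : y ^ 2 * x = (x - 1) * (t + x - 1)) :
    Z (lam t x y) x y = t / (t + 2 * x - 2) := by
  rw [Z, radicand_eq hx ht hy, sqrt_sq (div_pos ht (by linarith)).le]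

theorem Z_pos (hx : 1 < x) (ht : 0 < t) (hy : y ^ 2 * x = (x - 1) * (t + x - 1)) :
    0 < Z (lam t x y) x y := by
  rw [Z_eq hx ht hy]
  exact div_pos ht (by linarith)

theorem hasDerivAt_Z_fst (hx : 1 < x) (ht : 0 < t) (hy : y ^ 2 * x = (x - 1) * (t + x - 1)) :
    HasDerivAt (fun a => Z (lam t x y) a y) (-(2 * y ^ 2 / (t * (t + 2 * x - 2)))) x := by
  have hne := (pow_pos (div_pos ht (by linarith : (0 : ℝ) < t + 2 * x - 2)) 2).ne'
  rw [← radicand_eq hx ht hy] at hne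
  have hinner : HasDerivAt (fun a => 1 - 4 * lam t x y ^ 2 * a / (1 - lam t x y * y) ^ 2)
      (-(4 * lam t x y ^ 2 / (1 - lam t x y * y) ^ 2)) x := by
    simpa using (((hasDerivAt_id x).const_mul (4 * lam t x y ^ 2)).div_const
      ((1 - lam t x y * y) ^ 2)).const_sub 1
  refine ((hasDerivAt_sqrt hne).comp x hinner).congr_deriv ?_
  have := (lam_denom_pos (y := y) hx ht).ne'
  rw [← Z, Z_eq hx ht hy, one_sub_lam_mul hx ht, lam]
  field_simp
  ring

theorem hasDerivAt_Z_snd (hx : 1 < x) (ht : 0 < t) (hy : y ^ 2 * x = (x - 1) * (t + x - 1)) :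
    HasDerivAt (fun b => Z (lam t x y) x b) (-(4 * y ^ 3 * x / (t * (t + 2 * x - 2) ^ 2))) y := by
  have hne := (pow_pos (div_pos ht (by linarith : (0 : ℝ) < t + 2 * x - 2)) 2).ne'
  rw [← radicand_eq hx ht hy] at hne
  have hlin : HasDerivAt (fun b => 1 - lam t x y * b) (-lam t x y) y := by
    simpa using ((hasDerivAt_id y).const_mul (lam t x y)).const_sub 1
  have hinner := ((hasDerivAt_const y (4 * lam t x y ^ 2 * x)).div (hlin.fun_pow 2)
      (pow_ne_zero 2 (one_sub_lam_mul_pos hx ht).ne')).const_sub 1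
  refine ((hasDerivAt_sqrt hne).comp y hinner).congr_deriv ?_
  have := (lam_denom_pos (y := y) hx ht).ne'
  rw [← Z, Z_eq hx ht hy, one_sub_lam_mul hx ht, lam]
  norm_num only
  field_simp
  ring

theorem hasDerivAt_fBullet_fst (hx : 1 < x) (ht : 0 < t)
    (hy : y ^ 2 * x = (x - 1) * (t + x - 1)) :
    HasDerivAt (fun a => fBullet t (lam t x y) a y)
      (((x - 1) * (t + x - 1) * (t + 2 * x - 2) - (x - 1) * t ^ 2) / (x ^ 2 * t ^ 2)) x := by
  have hZ := hasDerivAt_Z_fst hx ht hy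
  have hden : 2 * x * Z (lam t x y) x y ≠ 0 := by
    have := Z_pos hx ht hy
    positivity
  refine ((((hZ.const_sub 1).const_mul t).div
    (((hasDerivAt_id x).const_mul 2).mul hZ) hden)).congr_deriv ?_
  have : t + 2 * x - 2 ≠ 0 := by linarith
  simp only [id, Pi.mul_apply]
  rw [Z_eq hx ht hy]
  field_simp
  linear_combination (2 * (t + 2 * x - 2)) * hy

theorem hasDerivAt_fBullet_snd (hx : 1 < x) (ht : 0 < t)
    (hy : y ^ 2 * x = (x - 1) * (t + x - 1)) :
    HasDerivAt (fun b => fBullet t (lam t x y) x b)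
      (2 * y * ((x - 1) * (t + x - 1)) / (x * t ^ 2)) y := by
  have hZ := hasDerivAt_Z_snd hx ht hy
  have hden : 2 * x * Z (lam t x y) x y ≠ 0 := by
    have := Z_pos hx ht hy
    positivity
  refine (((hZ.const_sub 1).const_mul t).div (hZ.const_mul (2 * x)) hden).congr_deriv ?_
  have : t + x * 2 - 2 ≠ 0 := by linarith
  rw [Z_eq hx ht hy]
  field_simp
  linear_combination (4 * y * (t + 2 * x - 2)) * hy

theorem hasDerivAt_fDiamond_fst (hx : 1 < x) (ht : 0 < t)
    (hy : y ^ 2 * x = (x - 1) * (t + x - 1)) :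
    HasDerivAt (fun a => fDiamond t (lam t x y) a y)
      (2 * y * ((x - 1) * (t + x - 1)) / (x * t ^ 2)) x := by
  have hZ := hasDerivAt_Z_fst hx ht hy
  have hden : (1 - lam t x y * y) * Z (lam t x y) x y ≠ 0 :=
    (mul_pos (one_sub_lam_mul_pos hx ht) (Z_pos hx ht hy)).ne'
  refine ((hasDerivAt_const x (t * lam t x y)).div
    (hZ.const_mul (1 - lam t x y * y)) hden).congr_deriv ?_
  have := (lam_denom_pos (y := y) hx ht).ne'
  have : t + 2 * x - 2 ≠ 0 := by linarith
  rw [Z_eq hx ht hy, one_sub_lam_mul hx ht, lam]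
  field_simp
  linear_combination (2 * y) * hy

theorem hasDerivAt_fDiamond_snd (hx : 1 < x) (ht : 0 < t)
    (hy : y ^ 2 * x = (x - 1) * (t + x - 1)) :
    HasDerivAt (fun b => fDiamond t (lam t x y) x b)
      ((x - 1) * (t + x - 1) * (t + 2 * x - 2) / (x * t ^ 2)) y := by
  have hZ := hasDerivAt_Z_snd hx ht hy
  have hlin : HasDerivAt (fun b => 1 - lam t x y * b) (-lam t x y) y := by
    simpa using ((hasDerivAt_id y).const_mul (lam t x y)).const_sub 1
  have hden : (1 - lam t x y * y) * Z (lam t x y) x y ≠ 0 :=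
    (mul_pos (one_sub_lam_mul_pos hx ht) (Z_pos hx ht hy)).ne'
  refine ((hasDerivAt_const y (t * lam t x y)).div (hlin.mul hZ) hden).congr_deriv ?_
  have := (lam_denom_pos (y := y) hx ht).ne'
  have : t + 2 * x - 2 ≠ 0 := by linarith
  simp only [Pi.mul_apply]
  rw [Z_eq hx ht hy, one_sub_lam_mul hx ht, lam]
  field_simp
  linear_combination (t ^ 2 + 4 * (x - 1) * (t + x - 1) + 4 * x * y ^ 2) * hy

theorem criticality_eq (hx : 1 < x) (ht : 0 < t) (hy : y ^ 2 * x = (x - 1) * (t + x - 1))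
    (hroot : criticalityPoly t x = 0) :
    x ^ 2 * (deriv (fun a => fBullet t (lam t x y) a y) x
          * deriv (fun b => fDiamond t (lam t x y) x b) y
        - deriv (fun b => fBullet t (lam t x y) x b) y
          * deriv (fun a => fDiamond t (lam t x y) a y) x) + 1
      = x ^ 2 * deriv (fun a => fBullet t (lam t x y) a y) x
        + deriv (fun b => fDiamond t (lam t x y) x b) y := by
  rw [(hasDerivAt_fBullet_fst hx ht hy).deriv, (hasDerivAt_fBullet_snd hx ht hy).deriv,
    (hasDerivAt_fDiamond_fst hx ht hy).deriv, (hasDerivAt_fDiamond_snd hx ht hy).deriv]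
  rw [criticalityPoly] at hroot
  field_simp
  linear_combination hroot + (-4 * (x - 1) ^ 2 * (t + x - 1) ^ 2) * hy

end CriticalPoint

theorem exists_criticalityPoly_root {t : ℝ} (ht : 0 < t) :
    ∃ x, 1 < x ∧ criticalityPoly t x = 0 := by
  set h : ℝ → ℝ := fun x => (x - 1) * (t + x - 1) * (t + 2 * x - 2) - x * t ^ 2
    + 2 * ((x - 1) * (t + x - 1)) * √((x - 1) * (t + x - 1))
  have h_one : h 1 < 0 := by simp [h]; positivity
  have h_pos : 0 < h (t + 2) := by
    have := sqrt_nonneg ((t + 2 - 1) * (t + (t + 2) - 1))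
    simp only [h]
    nlinarith
  obtain ⟨x, hx, hx_root⟩ := intermediate_value_Ioo (by linarith : (1 : ℝ) ≤ t + 2)
    (by fun_prop : Continuous h).continuousOn ⟨h_one, h_pos⟩
  refine ⟨x, hx.1, ?_⟩
  have hsq : √((x - 1) * (t + x - 1)) ^ 2 = (x - 1) * (t + x - 1) :=
    sq_sqrt (mul_nonneg (by linarith [hx.1]) (by linarith [hx.1]))
  rw [criticalityPoly]
  linear_combination ((x - 1) * (t + x - 1) * (t + 2 * x - 2) - x * t ^ 2
      - 2 * ((x - 1) * (t + x - 1)) * √((x - 1) * (t + x - 1))) * hx_root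
    + 4 * ((x - 1) * (t + x - 1)) ^ 2 * hsq

end Criticality

/-- For every `t > 0`, the criticality equation
`x² J_f(x,y) + 1 = x² ∂ₓ f^∙(x,y) + ∂_y f^⋄(x,y)` (with
`y = √((x-1)(t+x-1)/x)`, `λ = y/(t+2x+y²-2)`, and `f^∙, f^⋄` given by their
closed forms for the weights `q_n = tλⁿ`) has a real solution `x > 1`. -/
theorem stmt13 :
    ∀ t : ℝ, 0 < t → ∃ x : ℝ, 1 < x ∧
      (let y := Real.sqrt ((x - 1) * (t + x - 1) / x)
       let l := y / (t + 2 * x + y ^ 2 - 2)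
       let F : ℝ → ℝ → ℝ := fun a b =>
         t * (1 - Real.sqrt (1 - 4 * l ^ 2 * a / (1 - l * b) ^ 2)) /
           (2 * a * Real.sqrt (1 - 4 * l ^ 2 * a / (1 - l * b) ^ 2))
       let G : ℝ → ℝ → ℝ := fun a b =>
         t * l / ((1 - l * b) * Real.sqrt (1 - 4 * l ^ 2 * a / (1 - l * b) ^ 2))
       x ^ 2 * (deriv (fun a => F a y) x * deriv (fun b => G x b) y
                - deriv (fun b => F x b) y * deriv (fun a => G a y) x) + 1
         = x ^ 2 * deriv (fun a => F a y) x + deriv (fun b => G x b) y) := by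
  intro t ht
  obtain ⟨x, hx, hroot⟩ := Criticality.exists_criticalityPoly_root ht
  refine ⟨x, hx, Criticality.criticality_eq hx ht ?_ hroot⟩
  rw [sq_sqrt (div_nonneg (mul_nonneg (by linarith) (by linarith)) (by linarith)),
    div_mul_cancel₀ _ (by linarith)]
end
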